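/- For any 0-homogeneous tree language L, the bottom-up quotient automaton A_L recognizes L: L(A_L) = L. Moreover, for every tree t, the run of A_L on t yields exactly the singleton {t⁻¹(L)}. -/

import Mathlib

inductive GTree (S : Type) (ar : S → ℕ) : Type where
  | eps (x : ℕ) : GTree S ar
  | node (f : S) (ts : Fin (ar f) → GTree S ar) : GTree S ar

namespace GTree

variable {S : Type} {ar : S → ℕ}

/-- Substitute each ε-symbol `ε_x` by `σ x`. -/
def subst (σ : ℕ → GTree S ar) : GTree S ar → GTree S ar
  | eps x => σ x
  | node f ts => node f (fun i => subst σ (ts i))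

/-- The multiset of ε-indices of a tree. -/
def epsIdx : GTree S ar → Multiset ℕ
  | eps x => {x}
  | node _ ts => ∑ i, epsIdx (ts i)

/-- `Inc_ε(z,t)`: increment every ε-index by `z`. -/
def inc (z : ℕ) (t : GTree S ar) : GTree S ar :=
  subst (fun x => eps (x + z)) t

/-- Composition `t ∘ (t₁,…,t_k)`: graft `ts_j` at the `j`-th smallest ε-index of `t`. -/
def compo (t : GTree S ar) (ts : List (GTree S ar)) : GTree S ar :=
  subst (fun x => ts.getD ((Multiset.sort (epsIdx t) (· ≤ ·)).idxOf x) (eps x)) t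

/-- The tree `α(ε₁,…,ε_k)` associated with a symbol `α`. -/
def symTree (f : S) : GTree S ar := node f (fun i => eps (i.1 + 1))

/-- Bottom-up quotient `d⁻¹(t)` of a tree `t` w.r.t. a tree `d`. -/
def quotT (d t : GTree S ar) : Set (GTree S ar) :=
  { u | epsIdx u = 1 ::ₘ (epsIdx t - epsIdx d).map (· + 1) ∧
        subst (fun j => if j = 1 then d else eps (j - 1)) u = t }

/-- Bottom-up quotient `d⁻¹(L)` of a language w.r.t. a tree. -/
def quotL (d : GTree S ar) (L : Set (GTree S ar)) : Set (GTree S ar) :=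
  ⋃ t ∈ L, quotT d t

def incL (z : ℕ) (L : Set (GTree S ar)) : Set (GTree S ar) := inc z '' L

/-- Composition of languages `L ∘ (L₁,…,L_k)`. -/
def compoL (L : Set (GTree S ar)) (Ls : List (Set (GTree S ar))) : Set (GTree S ar) :=
  { u | ∃ t ∈ L, ∃ ts : List (GTree S ar), List.Forall₂ (· ∈ ·) ts Ls ∧ u = compo t ts }

/-- Partial composition `t ∘₁ L'` at the first (smallest) ε-index. -/
def pcomp (t : GTree S ar) (L' : Set (GTree S ar)) : Set (GTree S ar) :=
  { u | ∃ t' ∈ L', u = compo t (t' :: ((Multiset.sort (epsIdx t) (· ≤ ·)).tail).map eps) }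

/-- Partial composition of languages `L ∘₁ L'`. -/
def pcompL (L L' : Set (GTree S ar)) : Set (GTree S ar) := ⋃ t ∈ L, pcomp t L'

/-- Tree substitution `t_{b ← L}` of the 0-ary symbol `b` by the language `L`. -/
def bsub [DecidableEq S] (b : S) (L : Set (GTree S ar)) : GTree S ar → Set (GTree S ar)
  | eps x => {eps x}
  | node f ts =>
      if f = b then L
      else { u | ∃ us : Fin (ar f) → GTree S ar, (∀ i, us i ∈ bsub b L (ts i)) ∧ u = node f us }

/-- `b`-product `L₁ ·_b L₂`. -/
def prodB [DecidableEq S] (L₁ : Set (GTree S ar)) (b : S) (L₂ : Set (GTree S ar)) :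
    Set (GTree S ar) :=
  ⋃ t ∈ L₁, bsub b L₂ t

/-- Iterated `b`-product `L^{n_b}`. -/
def iterB [DecidableEq S] (b : S) (L : Set (GTree S ar)) : ℕ → Set (GTree S ar)
  | 0 => {symTree b}
  | n + 1 => iterB b L n ∪ prodB L b (iterB b L n)

/-- `b`-closure `L^{*_b}`. -/
def closB [DecidableEq S] (b : S) (L : Set (GTree S ar)) : Set (GTree S ar) :=
  ⋃ n, iterB b L n

/-- Iterated composition `L^{n∘}` of a 1-homogeneous language of ε-index `{x}`. -/
def iterC (x : ℕ) (L : Set (GTree S ar)) : ℕ → Set (GTree S ar)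
  | 0 => {eps x}
  | n + 1 => iterC x L n ∪ pcompL (iterC x L n) L

/-- Composition closure `L^⊛`. -/
def closC (x : ℕ) (L : Set (GTree S ar)) : Set (GTree S ar) := ⋃ n, iterC x L n

end GTree

structure TAut (S : Type) (ar : S → ℕ) (Q : Type) where
  F : Set Q
  δ : (f : S) → (Fin (ar f) → Q) → Set Q

namespace TAut

variable {S : Type} {ar : S → ℕ} {Q : Type}

/-- The run function `Δ`, with environment `ρ` giving the possible states at ε-leaves. -/
def run (A : TAut S ar Q) (ρ : ℕ → Set Q) : GTree S ar → Set Q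
  | .eps x => ρ x
  | .node f ts => { q | ∃ qs : Fin (ar f) → Q, (∀ i, qs i ∈ run A ρ (ts i)) ∧ q ∈ A.δ f qs }

/-- The language recognized by `A` (a set of 0-ary trees). -/
def lang (A : TAut S ar Q) : Set (GTree S ar) :=
  { t | GTree.epsIdx t = 0 ∧ (run A (fun _ => ∅) t ∩ A.F).Nonempty }

/-- The top language `L^q(A)` of a state `q` (a set of unary trees of ε-index `{1}`). -/
def top (A : TAut S ar Q) (q : Q) : Set (GTree S ar) :=
  { t | GTree.epsIdx t = {1} ∧
        (run A (fun x => if x = 1 then {q} else ∅) t ∩ A.F).Nonempty }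

/-- Determinism of a tree automaton. -/
def Det (A : TAut S ar Q) : Prop :=
  ∀ (f : S) (qs : Fin (ar f) → Q), (A.δ f qs).Subsingleton

/-- Accessibility: every state is reached by some 0-ary tree. -/
def Accessible (A : TAut S ar Q) : Prop :=
  ∀ q : Q, ∃ t : GTree S ar, GTree.epsIdx t = 0 ∧ q ∈ run A (fun _ => ∅) t

end TAut

/-- The bottom-up quotient automaton `A_L`. -/
def AutL {S : Type} {ar : S → ℕ} (L : Set (GTree S ar)) : TAut S ar (Set (GTree S ar)) where
  F := { M | (∃ t : GTree S ar, M = GTree.quotL t L) ∧ GTree.eps 1 ∈ M }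
  δ := fun f Ms => { M | ∃ ts : Fin (ar f) → GTree S ar,
        (∀ i, Ms i = GTree.quotL (ts i) L) ∧ M = GTree.quotL (GTree.node f ts) L }


/-!
Quotients are compatible with unary contexts: if `c` has the single hole `ε₁`, then
`u ∈ (c[x])⁻¹(L)` iff `u ∘ c ∈ x⁻¹(L)`. Replacing the children of a node one at a time therefore
shows that `t ↦ t⁻¹(L)` is a congruence, so the transition of `A_L` does not depend on the trees
chosen to represent its argument states, and by induction the run on a 0-ary tree `t` is
`{t⁻¹(L)}`. Acceptance then amounts to `ε₁ ∈ t⁻¹(L)`, i.e. to `t ∈ L`.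
-/

namespace GTree

variable {S : Type} {ar : S → ℕ}

lemma subst_congr {σ σ' : ℕ → GTree S ar} :
    ∀ {t : GTree S ar}, (∀ x ∈ epsIdx t, σ x = σ' x) → subst σ t = subst σ' t
  | eps x, h => h x (Multiset.mem_singleton_self x)
  | node f ts, h => congrArg (node f) <| funext fun i => subst_congr (t := ts i) fun x hx =>
      h x (Multiset.mem_sum.mpr ⟨i, Finset.mem_univ i, hx⟩)

lemma subst_subst (σ σ' : ℕ → GTree S ar) :
    ∀ t : GTree S ar, subst σ' (subst σ t) = subst (fun x => subst σ' (σ x)) t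
  | eps _ => rfl
  | node f ts => congrArg (node f) <| funext fun i => subst_subst σ σ' (ts i)

lemma epsIdx_node_eq_zero_iff {f : S} {ts : Fin (ar f) → GTree S ar} :
    epsIdx (node f ts) = 0 ↔ ∀ i, epsIdx (ts i) = 0 := by
  simp [epsIdx, Finset.sum_eq_zero_iff]

lemma subst_eq_self (σ : ℕ → GTree S ar) :
    ∀ {t : GTree S ar}, epsIdx t = 0 → subst σ t = t
  | eps x, h => by simp [epsIdx] at h
  | node f ts, h => congrArg (node f) <| funext fun i =>
      subst_eq_self σ (epsIdx_node_eq_zero_iff.mp h i)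

lemma epsIdx_subst (σ : ℕ → GTree S ar) :
    ∀ t : GTree S ar, epsIdx (subst σ t) = (epsIdx t).bind (fun x => epsIdx (σ x))
  | eps x => by simp [subst, epsIdx]
  | node f ts => by
      let bindHom : Multiset ℕ →+ Multiset ℕ :=
        { toFun := (Multiset.bind · fun x => epsIdx (σ x))
          map_zero' := Multiset.zero_bind _
          map_add' := fun s t => Multiset.add_bind s t _ }
      simp only [subst, epsIdx, epsIdx_subst σ (ts _)]
      exact (map_sum bindHom _ _).symm

lemma epsIdx_subst_of_eq_singleton {u : GTree S ar} (hu : epsIdx u = {1})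
    (σ : ℕ → GTree S ar) : epsIdx (subst σ u) = epsIdx (σ 1) := by
  rw [epsIdx_subst, hu, Multiset.singleton_bind]

def plug (d : GTree S ar) : ℕ → GTree S ar := fun j => if j = 1 then d else eps (j - 1)

lemma subst_plug_eps_one (d : GTree S ar) : subst (plug d) (eps 1) = d := rfl

lemma subst_plug_subst_plug {u c : GTree S ar} (hu : epsIdx u = {1}) (x : GTree S ar) :
    subst (plug x) (subst (plug c) u) = subst (plug (subst (plug x) c)) u := by
  rw [subst_subst]
  refine subst_congr fun j hj => ?_
  rw [hu, Multiset.mem_singleton] at hj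
  subst hj
  rfl

variable {L : Set (GTree S ar)}

lemma mem_quotL_iff (hL : ∀ t ∈ L, epsIdx t = 0) {d u : GTree S ar} :
    u ∈ quotL d L ↔ epsIdx u = {1} ∧ subst (plug d) u ∈ L := by
  simp only [quotL, Set.mem_iUnion, quotT, Set.mem_ofPred_eq, exists_prop]
  constructor
  · rintro ⟨t, ht, hu, rfl⟩
    exact ⟨by simpa [hL _ ht] using hu, ht⟩
  · rintro ⟨hu, ht⟩
    exact ⟨_, ht, by simpa [hL _ ht] using hu, rfl⟩

lemma eps_one_mem_quotL_iff (hL : ∀ t ∈ L, epsIdx t = 0) {t : GTree S ar} :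
    eps 1 ∈ quotL t L ↔ t ∈ L := by
  simp [mem_quotL_iff hL, epsIdx, subst_plug_eps_one]

lemma quotL_eq_empty (hL : ∀ t ∈ L, epsIdx t = 0) {d : GTree S ar} (hd : epsIdx d ≠ 0) :
    quotL d L = ∅ := by
  refine Set.eq_empty_of_forall_notMem fun u hu => hd ?_
  rw [mem_quotL_iff hL] at hu
  simpa [epsIdx_subst_of_eq_singleton hu.1, plug] using hL _ hu.2

lemma mem_quotL_subst_plug_iff (hL : ∀ t ∈ L, epsIdx t = 0) {c : GTree S ar}
    (hc : epsIdx c = {1}) (x u : GTree S ar) :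
    u ∈ quotL (subst (plug x) c) L ↔ epsIdx u = {1} ∧ subst (plug c) u ∈ quotL x L := by
  rw [mem_quotL_iff hL, mem_quotL_iff hL]
  refine and_congr_right fun hu => ?_
  rw [epsIdx_subst_of_eq_singleton hu, subst_plug_subst_plug hu]
  exact (and_iff_right hc).symm

lemma quotL_subst_plug_congr (hL : ∀ t ∈ L, epsIdx t = 0) {c : GTree S ar}
    (hc : epsIdx c = {1}) {x y : GTree S ar} (hxy : quotL x L = quotL y L) :
    quotL (subst (plug x) c) L = quotL (subst (plug y) c) L := by
  ext u
  rw [mem_quotL_subst_plug_iff hL hc, mem_quotL_subst_plug_iff hL hc, hxy]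

section node

variable {f : S} {g : Fin (ar f) → GTree S ar}

lemma epsIdx_node_update_eps_one (hg : ∀ k, epsIdx (g k) = 0) (i : Fin (ar f)) :
    epsIdx (node f (Function.update g i (eps 1))) = {1} := by
  simp only [epsIdx]
  rw [Finset.sum_eq_single i (fun k _ hk => by simp [Function.update_of_ne hk, hg k])
    (by simp)]
  simp [epsIdx]

lemma node_update_eq_subst_plug (hg : ∀ k, epsIdx (g k) = 0) (i : Fin (ar f))
    (x : GTree S ar) :
    node f (Function.update g i x) = subst (plug x) (node f (Function.update g i (eps 1))) := by
  refine congrArg (node f) <| funext fun k => ?_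
  rcases eq_or_ne k i with rfl | hk
  · simp [subst_plug_eps_one]
  · simp [Function.update_of_ne hk, subst_eq_self _ (hg k)]

end node

lemma quotL_node_congr_of_epsIdx_eq_zero (hL : ∀ t ∈ L, epsIdx t = 0) {f : S}
    {ds es : Fin (ar f) → GTree S ar} (hds : ∀ i, epsIdx (ds i) = 0)
    (hes : ∀ i, epsIdx (es i) = 0) (hq : ∀ i, quotL (ds i) L = quotL (es i) L) :
    quotL (node f ds) L = quotL (node f es) L := by
  classical
  suffices h : ∀ s : Finset (Fin (ar f)), quotL (node f (s.piecewise es ds)) L = quotL (node f ds) L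
    by simpa using (h Finset.univ).symm
  intro s
  induction s using Finset.induction with
  | empty => simp
  | insert i s hi ih =>
    set g := s.piecewise es ds
    have hg : ∀ k, epsIdx (g k) = 0 := fun k => by
      by_cases hk : k ∈ s <;> simp [g, hk, hds k, hes k]
    have hgi : Function.update g i (ds i) = g := by simp [g, hi]
    rw [Finset.piecewise_insert, node_update_eq_subst_plug hg,
      ← quotL_subst_plug_congr hL (epsIdx_node_update_eps_one hg i) (hq i),
      ← node_update_eq_subst_plug hg, hgi, ih]

/-- Children `es i` that are not 0-ary have empty quotient, which forces both sides to be empty. -/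
lemma quotL_node_congr (hL : ∀ t ∈ L, epsIdx t = 0) {f : S} {ds es : Fin (ar f) → GTree S ar}
    (hds : ∀ i, epsIdx (ds i) = 0) (hq : ∀ i, quotL (ds i) L = quotL (es i) L) :
    quotL (node f ds) L = quotL (node f es) L := by
  by_cases hes : ∀ i, epsIdx (es i) = 0
  · exact quotL_node_congr_of_epsIdx_eq_zero hL hds hes hq
  obtain ⟨i, hi⟩ := not_forall.mp hes
  have hdi : quotL (ds i) L = ∅ := (hq i).trans (quotL_eq_empty hL hi)
  rw [quotL_eq_empty hL (mt epsIdx_node_eq_zero_iff.mp hes)]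
  refine Set.eq_empty_of_forall_notMem fun u hu => ?_
  rw [← Function.update_eq_self i ds, node_update_eq_subst_plug hds,
    mem_quotL_subst_plug_iff hL (epsIdx_node_update_eps_one hds i), hdi] at hu
  exact hu.2

end GTree

lemma run_autL_of_epsIdx_eq_zero {S : Type} {ar : S → ℕ} {L : Set (GTree S ar)}
    (hL : ∀ t ∈ L, GTree.epsIdx t = 0) :
    ∀ t : GTree S ar, GTree.epsIdx t = 0 →
      TAut.run (AutL L) (fun _ => ∅) t = {GTree.quotL t L}
  | .eps _, h => by simp [GTree.epsIdx] at h
  | .node f ts, h => by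
    have hts := GTree.epsIdx_node_eq_zero_iff.mp h
    have ih i := run_autL_of_epsIdx_eq_zero hL (ts i) (hts i)
    ext M
    simp only [TAut.run, ih, Set.mem_singleton_iff]
    simp only [AutL, Set.mem_ofPred_eq]
    constructor
    · rintro ⟨qs, hqs, es, hq, rfl⟩
      exact (GTree.quotL_node_congr hL hts fun i => (hqs i).symm.trans (hq i)).symm
    · rintro rfl
      exact ⟨_, fun _ => rfl, ts, fun _ => rfl, rfl⟩

/-- the bottom-up quotient automaton `A_L` recognizes `L`, and its run on any
0-ary tree `t` is exactly the singleton `{t⁻¹(L)}`. -/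
theorem autL_recognizes {S : Type} {ar : S → ℕ} (L : Set (GTree S ar))
    (hL : ∀ t ∈ L, GTree.epsIdx t = 0) :
    TAut.lang (AutL L) = L ∧
    ∀ t : GTree S ar, GTree.epsIdx t = 0 →
      TAut.run (AutL L) (fun _ => ∅) t = {GTree.quotL t L} := by
  refine ⟨Set.ext fun t => ?_, run_autL_of_epsIdx_eq_zero hL⟩
  constructor
  · rintro ⟨ht, M, hM, -, hM1⟩
    rw [run_autL_of_epsIdx_eq_zero hL t ht, Set.mem_singleton_iff] at hM
    subst hM
    exact (GTree.eps_one_mem_quotL_iff hL).mp hM1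
  · intro ht
    refine ⟨hL t ht, GTree.quotL t L, ?_, ⟨t, rfl⟩, (GTree.eps_one_mem_quotL_iff hL).mpr ht⟩
    rw [run_autL_of_epsIdx_eq_zero hL t (hL t ht)]
    rfl
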